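/- arXiv:2312.03377 — 7 statements merged into one kernel-verified Lean document; each statement's English description precedes it below -/
import Mathlib

section
/- There exists a unique K-linear derivation ∂ of the monoid algebra K[S] such that ∂(f_λ) = ρ(λ)·f_{λ+μ} for every λ ∈ S with ρ(λ) > 0, and ∂(f_λ) = 0 for every λ ∈ S with ρ(λ) = 0. (This is the derivation ∂_μ attached to the Demazure root μ of the weight cone of S, defining the standard T-root subgroup on the affine toric variety Spec K[S].) -/
/-!
Because `ρ` is additive, `l ↦ ρ(l) f_{l+μ}` satisfies the Leibniz rule on basis elements:
`ρ(a+b) f_{a+b+μ} = f_a · ρ(b) f_{b+μ} + f_b · ρ(a) f_{a+μ}`. Positivity of `ρ` on `S` makes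
the terms with `ρ = 0` (where `l + μ` may leave `S`) vanish consistently, so the formula extends
linearly to a derivation, and a derivation of `K[S]` is determined by its values on the basis.
-/

open AddMonoidAlgebra

namespace AddMonoidAlgebra

variable {R G A : Type*} [CommSemiring R] [AddCommMonoid G]

theorem derivation_ext [AddCommMonoid A] [Module R A] [Module R[G] A]
    {D₁ D₂ : Derivation R R[G] A} (h : ∀ a, D₁ (of' R G a) = D₂ (of' R G a)) : D₁ = D₂ :=
  Derivation.ext <| LinearMap.congr_fun <| (AddMonoidAlgebra.basis G R).ext h

variable [AddCancelCommMonoid A] [Module R A] [Module R[G] A] [IsScalarTower R R[G] A]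

variable (R) in
noncomputable def mkDerivation (d : G → A)
    (hd : ∀ a b, d (a + b) = of' R G a • d b + of' R G b • d a) : Derivation R R[G] A :=
  Derivation.mk' ((AddMonoidAlgebra.basis G R).constr R d) fun x y => by
    induction x using AddMonoidAlgebra.induction_linear with
    | zero => simp
    | add x x' hx hx' => simp only [add_mul, map_add, hx, hx', add_smul, smul_add]; abel
    | single a r =>
      induction y using AddMonoidAlgebra.induction_linear with
      | zero => simp
      | add y y' hy hy' => simp only [mul_add, map_add, hy, hy', add_smul, smul_add]; abel
      | single b s =>
        have hbasis : ∀ c, (AddMonoidAlgebra.basis G R).constr R d (of' R G c) = d c :=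
          (AddMonoidAlgebra.basis G R).constr_basis R d
        have hsingle : ∀ c (t : R), single c t = t • of' R G c := fun c t => by
          rw [of'_apply, smul_single', mul_one]
        rw [single_mul_single, hsingle, hsingle, hsingle, map_smul, map_smul, map_smul, hbasis,
          hbasis, hbasis, hd, smul_add, smul_assoc, smul_assoc, smul_comm (of' R G a), smul_smul,
          smul_comm (of' R G b), smul_smul, mul_comm s]

theorem mkDerivation_of' (d : G → A) (hd) (a : G) : mkDerivation R d hd (of' R G a) = d a :=
  (AddMonoidAlgebra.basis G R).constr_basis R d a

end AddMonoidAlgebra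

section DemazureRoot

variable {K M : Type*} [CommRing K] [AddCommMonoid M] {S : AddSubmonoid M} {ρ : M →+ ℤ}
  {μ : M} (hS : ∀ l ∈ S, 0 < ρ l → l + μ ∈ S)

variable (K ρ) in
noncomputable def rootShift (l : S) : K[S] :=
  if h : 0 < ρ l then (ρ l : K) • of' K S ⟨l + μ, hS l l.2 h⟩ else 0

theorem of'_mul_rootShift (hρ : ∀ l ∈ S, 0 ≤ ρ l) {a b c : S} (hc : (c : M) = a + b + μ) :
    of' K S b * rootShift K ρ hS a = (ρ a : K) • of' K S c := by
  unfold rootShift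
  split_ifs with ha
  · rw [mul_smul_comm, of'_apply, of'_apply, single_mul_single, one_mul]
    congr 3
    ext
    rw [hc, AddSubmonoid.coe_add, add_assoc, add_left_comm]
  · rw [mul_zero, le_antisymm (not_lt.1 ha) (hρ a a.2), Int.cast_zero, zero_smul]

theorem rootShift_add (hρ : ∀ l ∈ S, 0 ≤ ρ l) (a b : S) :
    rootShift K ρ hS (a + b) =
      of' K S a * rootShift K ρ hS b + of' K S b * rootShift K ρ hS a := by
  by_cases hab : 0 < ρ (a + b : S)
  · rw [rootShift, dif_pos hab,
      of'_mul_rootShift hS hρ (c := ⟨_, hS _ (a + b).2 hab⟩) (by simp [add_comm (a : M)]),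
      of'_mul_rootShift hS hρ (c := ⟨_, hS _ (a + b).2 hab⟩) (by simp), ← add_smul]
    simp [add_comm]
  · rw [rootShift, dif_neg hab]
    have ha := hρ a a.2
    have hb := hρ b b.2
    simp only [AddSubmonoid.coe_add, map_add] at hab
    simp only [rootShift, dif_neg (show ¬ 0 < ρ a by omega), dif_neg (show ¬ 0 < ρ b by omega),
      mul_zero, add_zero]

variable (K) in
noncomputable def rootDerivation (hρ : ∀ l ∈ S, 0 ≤ ρ l) : Derivation K K[S] K[S] :=
  mkDerivation K (rootShift K ρ hS) fun a b => rootShift_add hS hρ a b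

theorem rootDerivation_of' (hρ : ∀ l ∈ S, 0 ≤ ρ l) (l : S) :
    rootDerivation K hS hρ (of' K S l) = rootShift K ρ hS l :=
  mkDerivation_of' _ _ l

end DemazureRoot

theorem stmt0_general {K M : Type*} [Field K] [AddCommGroup M]
    (S : AddSubmonoid M) (ρ : M →+ ℤ) (μ : M)
    (h1 : ∀ l ∈ S, 0 ≤ ρ l)
    (h3 : ∀ l ∈ S, 0 < ρ l → l + μ ∈ S) :
    ∃! D : Derivation K (AddMonoidAlgebra K S) (AddMonoidAlgebra K S),
      ∀ l : S,
        (∀ h : 0 < ρ (l : M),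
          D (of' K S l) = ((ρ (l : M) : K)) • of' K S (⟨(l : M) + μ, h3 l l.2 h⟩ : S))
        ∧ (ρ (l : M) = 0 → D (of' K S l) = 0) := by
  refine ⟨rootDerivation K h3 h1, fun l => ⟨fun hl => ?_, fun hl => ?_⟩, fun D hD => ?_⟩
  · rw [rootDerivation_of', rootShift, dif_pos hl]
  · rw [rootDerivation_of', rootShift, dif_neg hl.not_gt]
  · refine derivation_ext fun l => ?_
    rw [rootDerivation_of', rootShift]
    split_ifs with hl
    · exact (hD l).1 hl
    · exact (hD l).2 (le_antisymm (not_lt.1 hl) (h1 l l.2))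

/-- There exists a unique `K`-linear derivation `∂` of the monoid algebra `K[S]` such that
`∂ f_λ = ρ(λ) • f_{λ+μ}` when `ρ(λ) > 0` and `∂ f_λ = 0` when `ρ(λ) = 0`. -/
theorem stmt0 {K M : Type*} [Field K] [CharZero K] [AddCommGroup M]
    [Module.Free ℤ M] [Module.Finite ℤ M]
    (S : AddSubmonoid M) (ρ : M →+ ℤ) (μ : M)
    (h1 : ∀ l ∈ S, 0 ≤ ρ l) (h2 : ρ μ = -1)
    (h3 : ∀ l ∈ S, 0 < ρ l → l + μ ∈ S) :
    ∃! D : Derivation K (AddMonoidAlgebra K S) (AddMonoidAlgebra K S),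
      ∀ l : S,
        (∀ h : 0 < ρ (l : M),
          D (of' K S l) = ((ρ (l : M) : K)) • of' K S (⟨(l : M) + μ, h3 l l.2 h⟩ : S))
        ∧ (ρ (l : M) = 0 → D (of' K S l) = 0) :=
  stmt0_general S ρ μ h1 h3
end

section
/- The derivation ∂ is locally nilpotent: for every element a of the monoid algebra K[S] there exists n ∈ ℕ such that ∂^n(a) = 0. -/
open AddMonoidAlgebra

/-
`∂` lowers the `ρ`-degree of a monomial by one and kills the monomials of degree `0`,
so `∂^(k+1)` kills every monomial of degree at most `k` (`ρ ≥ 0` on `S`). The vectors killed by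
some power of `∂` form a submodule (the generalized `0`-eigenspace), and monomials span `K[S]`.
-/

namespace Module.End

variable {R V : Type*} [CommRing R] [AddCommGroup V] [Module R V]

lemma mem_maxGenEigenspace_zero {f : End R V} {v : V} :
    v ∈ f.maxGenEigenspace 0 ↔ ∃ k : ℕ, (f ^ k) v = 0 := by
  simp [mem_maxGenEigenspace]

end Module.End

section DemazureRoot

variable {K M : Type*} [Field K] [AddCommGroup M] {S : AddSubmonoid M} {ρ : M →+ ℤ} {μ : M}
  {D : Derivation K (AddMonoidAlgebra K S) (AddMonoidAlgebra K S)}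
  (h1 : ∀ l ∈ S, 0 ≤ ρ l) (h2 : ρ μ = -1)
  (h3 : ∀ l ∈ S, 0 < ρ l → l + μ ∈ S)
  (hD : ∀ l : S,
    (∀ h : 0 < ρ (l : M),
      D (of' K S l) = ((ρ (l : M) : K)) • of' K S (⟨(l : M) + μ, h3 l l.2 h⟩ : S))
    ∧ (ρ (l : M) = 0 → D (of' K S l) = 0))

include h1 h2 hD

lemma pow_apply_of'_eq_zero_of_lt {k : ℕ} {l : S} (hl : ρ l < k) :
    (D.toLinearMap ^ k) (of' K S l) = 0 := by
  induction k generalizing l with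
  | zero => exact absurd (h1 l l.2) (by omega)
  | succ k ih =>
    rw [pow_succ, Module.End.mul_apply, Derivation.coeFn_coe]
    rcases (h1 l l.2).eq_or_lt with hzero | hpos
    · rw [(hD l).2 hzero.symm, map_zero]
    · have hdeg : ρ ((l : M) + μ) < k := by rw [map_add, h2]; omega
      rw [(hD l).1 hpos, map_smul, ih hdeg, smul_zero]

lemma mem_maxGenEigenspace_zero_of_demazureRoot (a : AddMonoidAlgebra K S) :
    a ∈ Module.End.maxGenEigenspace D.toLinearMap 0 := by
  induction a using AddMonoidAlgebra.induction_linear with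
  | zero => exact zero_mem _
  | add a b ha hb => exact add_mem ha hb
  | single l c =>
    have hmonomial : single l c = c • of' K S l := by rw [of'_apply, smul_single', mul_one]
    rw [hmonomial]
    refine Submodule.smul_mem _ c (Module.End.mem_maxGenEigenspace_zero.mpr ?_)
    exact ⟨(ρ l).toNat + 1, pow_apply_of'_eq_zero_of_lt h1 h2 h3 hD (by omega)⟩

end DemazureRoot

theorem stmt1_general {K M : Type*} [Field K] [AddCommGroup M]
    (S : AddSubmonoid M) (ρ : M →+ ℤ) (μ : M)
    (h1 : ∀ l ∈ S, 0 ≤ ρ l) (h2 : ρ μ = -1)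
    (h3 : ∀ l ∈ S, 0 < ρ l → l + μ ∈ S)
    (D : Derivation K (AddMonoidAlgebra K S) (AddMonoidAlgebra K S))
    (hD : ∀ l : S,
      (∀ h : 0 < ρ (l : M),
        D (of' K S l) = ((ρ (l : M) : K)) • of' K S (⟨(l : M) + μ, h3 l l.2 h⟩ : S))
      ∧ (ρ (l : M) = 0 → D (of' K S l) = 0)) :
    ∀ a : AddMonoidAlgebra K S, ∃ n : ℕ, (D.toLinearMap ^ n) a = 0 := fun a =>
  Module.End.mem_maxGenEigenspace_zero.mp
    (mem_maxGenEigenspace_zero_of_demazureRoot h1 h2 h3 hD a)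

/-- The derivation `∂` attached to the Demazure root `μ` is locally nilpotent. -/
theorem stmt1 {K M : Type*} [Field K] [CharZero K] [AddCommGroup M]
    [Module.Free ℤ M] [Module.Finite ℤ M]
    (S : AddSubmonoid M) (ρ : M →+ ℤ) (μ : M)
    (h1 : ∀ l ∈ S, 0 ≤ ρ l) (h2 : ρ μ = -1)
    (h3 : ∀ l ∈ S, 0 < ρ l → l + μ ∈ S)
    (D : Derivation K (AddMonoidAlgebra K S) (AddMonoidAlgebra K S))
    (hD : ∀ l : S,
      (∀ h : 0 < ρ (l : M),
        D (of' K S l) = ((ρ (l : M) : K)) • of' K S (⟨(l : M) + μ, h3 l l.2 h⟩ : S))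
      ∧ (ρ (l : M) = 0 → D (of' K S l) = 0)) :
    ∀ a : AddMonoidAlgebra K S, ∃ n : ℕ, (D.toLinearMap ^ n) a = 0 :=
  stmt1_general S ρ μ h1 h2 h3 D hD
end

section
/- Each map Φ_s is a K-algebra homomorphism of K[S], Φ_0 is the identity, and Φ_s ∘ Φ_t = Φ_{s+t} for all s, t ∈ K; in particular every Φ_s is a K-algebra automorphism of K[S]. (This is the one-parameter additive group of automorphisms, i.e. the G_a-action, attached to the Demazure root μ.) -/
/-!
Embed `K[S]` in `K[M]` along `S ⊆ M` and put `X = f_μ`, `w(λ) = ρ(λ) ≥ 0`. Since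
`f_{λ+nμ} = f_λ Xⁿ`, the binomial theorem turns the defining formula into
`Φ_s f_λ = f_λ (1 + sX)^{w(λ)}` inside `K[M]`. The right-hand side is multiplicative in `λ`
because `w` is additive on `S`, so `Φ_s` is an algebra map. As `ρ(μ) = -1`, `w(λ + nμ) = w(λ) - n`,
hence `Φ_s Φ_t f_λ = f_λ ∑ C(w,n) tⁿ Xⁿ (1 + sX)^{w-n} = f_λ (1 + (s+t)X)^w = Φ_{s+t} f_λ`,
and `Φ_{-s}` inverts `Φ_s`.
-/

open AddMonoidAlgebra Finset

theorem one_add_add_smul_pow {K R : Type*} [CommSemiring K] [CommSemiring R] [Algebra K R]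
    (X : R) (s t : K) (A : ℕ) :
    (1 + (s + t) • X) ^ A =
      ∑ n ∈ range (A + 1), ((A.choose n : K) * t ^ n) • (X ^ n * (1 + s • X) ^ (A - n)) := by
  have hsplit : 1 + (s + t) • X = t • X + (1 + s • X) := by rw [add_smul]; abel
  rw [hsplit, add_pow]
  refine sum_congr rfl fun n _ => ?_
  simp only [Algebra.smul_def, map_mul, map_pow, map_natCast, mul_pow]
  ring

namespace AddMonoidAlgebra

variable {K M : Type*} [Semiring K]

theorem of'_mul_of' [AddMonoid M] (a b : M) : of' K M a * of' K M b = of' K M (a + b) := by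
  simp only [of'_apply, single_mul_single, mul_one]

theorem of'_mul_of'_pow [AddCommMonoid M] (l μ : M) (n : ℕ) :
    of' K M l * of' K M μ ^ n = of' K M (l + n • μ) := by
  simp only [of'_apply, single_pow, single_mul_single, one_pow, mul_one]

theorem lhom_ext_of' {N : Type*} [AddMonoid M] [AddCommMonoid N] [Module K N]
    {f g : AddMonoidAlgebra K M →ₗ[K] N} (h : ∀ l, f (of' K M l) = g (of' K M l)) : f = g :=
  lhom_ext' fun l => LinearMap.ext_ring (h l)

theorem mapDomainAlgHom_of' {K M N : Type*} [CommSemiring K] [AddMonoid M] [AddMonoid N]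
    (f : M →+ N) (m : M) : mapDomainAlgHom K K f (of' K M m) = of' K N (f m) := by
  simp

end AddMonoidAlgebra

namespace LinearMap

section
variable {R A B : Type*} [CommSemiring R] [Semiring A] [Semiring B] [Algebra R A] [Algebra R B]
  {ι : A →ₐ[R] B} {Φ : A →ₗ[R] A} {Ψ : A →ₐ[R] B}

theorem map_mul_of_comp_eq_algHom (hι : Function.Injective ι)
    (h : ι.toLinearMap ∘ₗ Φ = Ψ.toLinearMap) (a b : A) : Φ (a * b) = Φ a * Φ b := by
  have h' (x : A) : ι (Φ x) = Ψ x := congr($h x)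
  apply hι
  rw [h', map_mul ι, h', h', map_mul]

theorem map_one_of_comp_eq_algHom (hι : Function.Injective ι)
    (h : ι.toLinearMap ∘ₗ Φ = Ψ.toLinearMap) : Φ 1 = 1 :=
  hι <| by rw [map_one ι, ← map_one Ψ]; exact congr($h 1)

end

theorem bijective_of_comp_eq_add {G R V : Type*} [AddGroup G] [Semiring R]
    [AddCommMonoid V] [Module R V] {Φ : G → V →ₗ[R] V} (h0 : Φ 0 = id)
    (hadd : ∀ s t, (Φ s).comp (Φ t) = Φ (s + t)) (s : G) : Function.Bijective (Φ s) := by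
  refine Function.bijective_iff_has_inverse.2 ⟨Φ (-s), fun x => ?_, fun x => ?_⟩
  · rw [← comp_apply, hadd, neg_add_cancel, h0, id_apply]
  · rw [← comp_apply, hadd, add_neg_cancel, h0, id_apply]

end LinearMap

section
variable {K M : Type*} [CommSemiring K] [AddCommGroup M] {S : AddSubmonoid M}

def natWeight (ρ : M →+ ℤ) (h : ∀ l ∈ S, 0 ≤ ρ l) : S →+ ℕ where
  toFun l := (ρ l).toNat
  map_zero' := by simp
  map_add' l m := by
    have := h l l.2
    have := h m m.2
    simp only [AddSubmonoid.coe_add, map_add]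
    omega

variable (K) in
noncomputable def rootExp (w : S →+ ℕ) (μ : M) (s : K) :
    AddMonoidAlgebra K S →ₐ[K] AddMonoidAlgebra K M :=
  lift K (AddMonoidAlgebra K M) S
    { toFun l := of' K M l.toAdd * (1 + s • of' K M μ) ^ w l.toAdd
      map_one' := by simp [one_def]
      map_mul' l m := by
        simp only [toAdd_mul, AddSubmonoid.coe_add, map_add, pow_add]
        rw [← of'_mul_of']
        ring }

theorem rootExp_of' (w : S →+ ℕ) (μ : M) (s : K) (l : S) :
    rootExp K w μ s (of' K S l) = of' K M l * (1 + s • of' K M μ) ^ w l := by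
  simp [rootExp]

theorem rootExp_zero (w : S →+ ℕ) (μ : M) :
    (rootExp K w μ 0).toLinearMap = (mapDomainAlgHom K K S.subtype).toLinearMap :=
  lhom_ext_of' fun l => by
    rw [AlgHom.toLinearMap_apply, AlgHom.toLinearMap_apply, rootExp_of', mapDomainAlgHom_of',
      zero_smul, add_zero, one_pow, mul_one]
    rfl

variable {ρ : M →+ ℤ} {μ : M} {σ : S → ℕ → S}

theorem le_natWeight_iff (h1 : ∀ l ∈ S, 0 ≤ ρ l) {l : S} {n : ℕ} :
    n ≤ natWeight ρ h1 l ↔ (n : ℤ) ≤ ρ l :=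
  Int.le_toNat (h1 l l.2)

theorem natWeight_shift (h1 : ∀ l ∈ S, 0 ≤ ρ l) (h2 : ρ μ = -1)
    (hσ : ∀ (l : S) (n : ℕ), (n : ℤ) ≤ ρ l → (σ l n : M) = l + n • μ) {l : S} {n : ℕ}
    (hn : n ≤ natWeight ρ h1 l) : natWeight ρ h1 (σ l n) = natWeight ρ h1 l - n := by
  have hρ : ρ (σ l n) = ρ l - n := by
    rw [hσ l n ((le_natWeight_iff h1).1 hn), map_add, map_nsmul, h2]
    simp [sub_eq_add_neg]
  simp only [natWeight, AddMonoidHom.coe_mk, ZeroHom.coe_mk, hρ]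
  omega

theorem rootExp_of'_shift (h1 : ∀ l ∈ S, 0 ≤ ρ l) (h2 : ρ μ = -1)
    (hσ : ∀ (l : S) (n : ℕ), (n : ℤ) ≤ ρ l → (σ l n : M) = l + n • μ) (s : K) {l : S} {n : ℕ}
    (hn : n ≤ natWeight ρ h1 l) :
    rootExp K (natWeight ρ h1) μ s (of' K S (σ l n)) =
      of' K M l * (of' K M μ ^ n * (1 + s • of' K M μ) ^ (natWeight ρ h1 l - n)) := by
  rw [rootExp_of', natWeight_shift h1 h2 hσ hn, hσ l n ((le_natWeight_iff h1).1 hn),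
    ← of'_mul_of'_pow, mul_assoc]

theorem mapDomain_comp_eq_rootExp (h1 : ∀ l ∈ S, 0 ≤ ρ l)
    (hσ : ∀ (l : S) (n : ℕ), (n : ℤ) ≤ ρ l → (σ l n : M) = l + n • μ) {s : K}
    {Φ : AddMonoidAlgebra K S →ₗ[K] AddMonoidAlgebra K S}
    (hΦ : ∀ l : S, Φ (of' K S l) = ∑ n ∈ range ((ρ l).toNat + 1),
        (((ρ l).toNat.choose n : K) * s ^ n) • of' K S (σ l n)) :
    (mapDomainAlgHom K K S.subtype).toLinearMap ∘ₗ Φ =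
      (rootExp K (natWeight ρ h1) μ s).toLinearMap := by
  refine lhom_ext_of' fun l => ?_
  have hbinom := one_add_add_smul_pow (of' K M μ) 0 s (natWeight ρ h1 l)
  simp only [zero_add, zero_smul, add_zero, one_pow, mul_one] at hbinom
  rw [LinearMap.comp_apply, AlgHom.toLinearMap_apply, AlgHom.toLinearMap_apply, hΦ, rootExp_of',
    hbinom, mul_sum, map_sum]
  refine sum_congr rfl fun n hn => ?_
  rw [mem_range, Nat.lt_succ_iff] at hn
  rw [map_smul, mul_smul_comm, of'_mul_of'_pow, ← hσ l n ((le_natWeight_iff h1).1 hn),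
    mapDomainAlgHom_of']
  rfl

theorem comp_eq_add_of_binomial (h1 : ∀ l ∈ S, 0 ≤ ρ l) (h2 : ρ μ = -1)
    (hσ : ∀ (l : S) (n : ℕ), (n : ℤ) ≤ ρ l → (σ l n : M) = l + n • μ)
    {Φ : K → AddMonoidAlgebra K S →ₗ[K] AddMonoidAlgebra K S}
    (hΦ : ∀ (s : K) (l : S), Φ s (of' K S l) = ∑ n ∈ range ((ρ l).toNat + 1),
        (((ρ l).toNat.choose n : K) * s ^ n) • of' K S (σ l n)) (s t : K) :
    (Φ s).comp (Φ t) = Φ (s + t) := by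
  have hι : Function.Injective (mapDomainAlgHom K K S.subtype) :=
    mapDomain_injective Subtype.val_injective
  have hΨ (s : K) (x) :
      mapDomainAlgHom K K S.subtype (Φ s x) = rootExp K (natWeight ρ h1) μ s x :=
    congr($(mapDomain_comp_eq_rootExp h1 hσ (hΦ s)) x)
  refine lhom_ext_of' fun l => hι ?_
  rw [LinearMap.comp_apply, hΨ, hΨ, hΦ, map_sum, rootExp_of', one_add_add_smul_pow _ s t, mul_sum]
  refine sum_congr rfl fun n hn => ?_
  rw [mem_range, Nat.lt_succ_iff] at hn
  rw [map_smul, rootExp_of'_shift h1 h2 hσ s hn, mul_smul_comm]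
  rfl

end

theorem stmt3_general {K M : Type*} [Field K] [AddCommGroup M]
    (S : AddSubmonoid M) (ρ : M →+ ℤ) (μ : M)
    (h1 : ∀ l ∈ S, 0 ≤ ρ l) (h2 : ρ μ = -1)
    -- `σ l n` is the element `λ + nμ` of `S`, for `0 ≤ n ≤ ρ(λ)`
    (σ : S → ℕ → S)
    (hσ : ∀ (l : S) (n : ℕ), (n : ℤ) ≤ ρ (l : M) → ((σ l n : M) = (l : M) + n • μ))
    (Φ : K → (AddMonoidAlgebra K S →ₗ[K] AddMonoidAlgebra K S))
    (hΦ : ∀ (s : K) (l : S), Φ s (of' K S l) =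
      ∑ n ∈ Finset.range ((ρ (l : M)).toNat + 1),
        (((ρ (l : M)).toNat.choose n : K) * s ^ n) • of' K S (σ l n)) :
    (∀ s : K, ∀ a b : AddMonoidAlgebra K S, Φ s (a * b) = Φ s a * Φ s b)
    ∧ (∀ s : K, Φ s 1 = 1)
    ∧ Φ 0 = LinearMap.id
    ∧ (∀ s t : K, (Φ s).comp (Φ t) = Φ (s + t))
    ∧ (∀ s : K, Function.Bijective (Φ s)) := by
  have hι : Function.Injective (mapDomainAlgHom K K S.subtype) :=
    mapDomain_injective Subtype.val_injective
  have hΨ (s : K) := mapDomain_comp_eq_rootExp h1 hσ (hΦ s)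
  have hzero : Φ 0 = LinearMap.id :=
    (LinearMap.cancel_left hι).1 (by rw [hΨ 0, rootExp_zero, LinearMap.comp_id])
  have hadd := comp_eq_add_of_binomial h1 h2 hσ hΦ
  exact ⟨fun s => (Φ s).map_mul_of_comp_eq_algHom hι (hΨ s),
    fun s => (Φ s).map_one_of_comp_eq_algHom hι (hΨ s), hzero, hadd,
    LinearMap.bijective_of_comp_eq_add hzero hadd⟩

/-- The maps `Φ_s` with `Φ_s f_λ = ∑_{n=0}^{ρ(λ)} C(ρ(λ),n) s^n f_{λ+nμ}` form a one-parameter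
group of `K`-algebra automorphisms of `K[S]`: each `Φ_s` is a `K`-algebra homomorphism, `Φ_0` is
the identity, `Φ_s ∘ Φ_t = Φ_{s+t}`, and every `Φ_s` is bijective. -/
theorem stmt3 {K M : Type*} [Field K] [CharZero K] [AddCommGroup M]
    [Module.Free ℤ M] [Module.Finite ℤ M]
    (S : AddSubmonoid M) (ρ : M →+ ℤ) (μ : M)
    (h1 : ∀ l ∈ S, 0 ≤ ρ l) (h2 : ρ μ = -1)
    (h3 : ∀ l ∈ S, 0 < ρ l → l + μ ∈ S)
    -- `σ l n` is the element `λ + nμ` of `S`, for `0 ≤ n ≤ ρ(λ)`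
    (σ : S → ℕ → S)
    (hσ : ∀ (l : S) (n : ℕ), (n : ℤ) ≤ ρ (l : M) → ((σ l n : M) = (l : M) + n • μ))
    (Φ : K → (AddMonoidAlgebra K S →ₗ[K] AddMonoidAlgebra K S))
    (hΦ : ∀ (s : K) (l : S), Φ s (of' K S l) =
      ∑ n ∈ Finset.range ((ρ (l : M)).toNat + 1),
        (((ρ (l : M)).toNat.choose n : K) * s ^ n) • of' K S (σ l n)) :
    (∀ s : K, ∀ a b : AddMonoidAlgebra K S, Φ s (a * b) = Φ s a * Φ s b)
    ∧ (∀ s : K, Φ s 1 = 1)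
    ∧ Φ 0 = LinearMap.id
    ∧ (∀ s t : K, (Φ s).comp (Φ t) = Φ (s + t))
    ∧ (∀ s : K, Function.Bijective (Φ s)) :=
  stmt3_general S ρ μ h1 h2 σ hσ Φ hΦ
end

section
/- The one-parameter family Φ is the exponential of the locally nilpotent derivation ∂: for every s ∈ K and every a ∈ K[S], if N ∈ ℕ satisfies ∂^{N+1}(a) = 0, then Φ_s(a) = Σ_{n=0}^{N} (s^n / n!) · ∂^n(a). -/
/-!
Along the chain `e n = f_{λ+nμ}` the derivation acts as `∂ e n = (ρ(λ) - n) e (n+1)`, so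
`∂^n f_λ = ρ(λ)(ρ(λ)-1)⋯(ρ(λ)-n+1) f_{λ+nμ}`, which is `n! C(ρ(λ), n) f_{λ+nμ}` and vanishes for
`n > ρ(λ)`. Hence `Φ_s f_λ = ∑_{n ≤ M} (s^n/n!) ∂^n f_λ` for every `M ≥ ρ(λ)`; by linearity
`Φ_s a = ∑_{n ≤ M} (s^n/n!) ∂^n a` for all large `M`, and the terms with `n > N` vanish once
`∂^{N+1} a = 0`.
-/

open AddMonoidAlgebra Filter Finset
open scoped Nat

theorem Module.End.pow_apply_eq_descFactorial_smul {R V : Type*} [Semiring R] [AddCommMonoid V]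
    [Module R V] (D : Module.End R V) (e : ℕ → V) (r : ℕ)
    (hD : ∀ n ≤ r, D (e n) = ((r - n : ℕ) : R) • e (n + 1)) (n : ℕ) :
    (D ^ n) (e 0) = (r.descFactorial n : R) • e n := by
  induction n with
  | zero => simp
  | succ n ih =>
    rw [pow_succ', Module.End.mul_apply, ih, map_smul]
    rcases le_or_gt n r with hn | hn
    · rw [hD n hn, smul_smul, Nat.descFactorial_succ, Nat.cast_mul, Nat.cast_comm]
    · rw [Nat.descFactorial_eq_zero_iff_lt.mpr hn, Nat.descFactorial_eq_zero_iff_lt.mpr (by omega)]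
      simp

theorem Module.End.sum_choose_mul_pow_smul_eq_sum_pow_div_factorial_smul {K V : Type*} [Field K]
    [CharZero K] [AddCommGroup V] [Module K V] (D : Module.End K V) (e : ℕ → V) (r : ℕ)
    (hD : ∀ n ≤ r, D (e n) = ((r - n : ℕ) : K) • e (n + 1)) (s : K) {M : ℕ} (hrM : r ≤ M) :
    ∑ n ∈ range (r + 1), ((r.choose n : K) * s ^ n) • e n =
      ∑ n ∈ range (M + 1), (s ^ n / (n ! : K)) • (D ^ n) (e 0) := by
  have hpow := D.pow_apply_eq_descFactorial_smul e r hD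
  rw [← sum_subset (range_subset_range.mpr (by omega : r + 1 ≤ M + 1))]
  · refine sum_congr rfl fun n _ => ?_
    have : (n ! : K) ≠ 0 := Nat.cast_ne_zero.mpr n.factorial_ne_zero
    rw [hpow, smul_smul, Nat.descFactorial_eq_factorial_mul_choose, Nat.cast_mul]
    field_simp
  · intro n _ hn
    rw [mem_range, not_lt] at hn
    rw [hpow, Nat.descFactorial_eq_zero_iff_lt.mpr (by omega), Nat.cast_zero, zero_smul, smul_zero]

theorem Module.End.sum_range_smul_pow_apply_eq_of_pow_apply_eq_zero {R V : Type*} [Semiring R]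
    [AddCommMonoid V] [Module R V] (D : Module.End R V) (c : ℕ → R) {a : V} {N M : ℕ}
    (hNM : N ≤ M) (ha : (D ^ (N + 1)) a = 0) :
    ∑ n ∈ range (M + 1), c n • (D ^ n) a = ∑ n ∈ range (N + 1), c n • (D ^ n) a := by
  refine (sum_subset (range_subset_range.mpr (by omega)) fun n _ hn => ?_).symm
  rw [mem_range, not_lt] at hn
  rw [Module.End.pow_map_zero_of_le hn ha, smul_zero]

theorem AddMonoidAlgebra.eventually_eq_sum_smul_pow_apply {k G : Type*} [CommSemiring k]
    (Φ D : Module.End k k[G]) (c : ℕ → k)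
    (h : ∀ g, ∀ᶠ M in atTop, Φ (of' k G g) = ∑ n ∈ range (M + 1), c n • (D ^ n) (of' k G g))
    (a : k[G]) : ∀ᶠ M in atTop, Φ a = ∑ n ∈ range (M + 1), c n • (D ^ n) a := by
  induction a using AddMonoidAlgebra.induction_linear with
  | zero => simp
  | add x y hx hy =>
    filter_upwards [hx, hy] with M hxM hyM
    simp only [map_add, hxM, hyM, smul_add, sum_add_distrib]
  | single g r =>
    filter_upwards [h g] with M hM
    rw [← mul_one r, ← smul_single', ← of'_apply, map_smul, hM, smul_sum]
    simp only [map_smul, smul_comm r]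

section Shift

variable {K M : Type*} [Ring K] [AddCommGroup M] {S : AddSubmonoid M} {ρ : M →+ ℤ} {μ : M}
  {σ : S → ℕ → S}

theorem rho_shift (h1 : ∀ l ∈ S, 0 ≤ ρ l) (h2 : ρ μ = -1)
    (hσ : ∀ (l : S) (n : ℕ), (n : ℤ) ≤ ρ (l : M) → ((σ l n : M) = (l : M) + n • μ))
    (l : S) {n : ℕ} (hn : n ≤ (ρ l).toNat) : ρ (σ l n) = (((ρ l).toNat - n : ℕ) : ℤ) := by
  have hl := Int.toNat_of_nonneg (h1 l l.2)
  rw [hσ l n (by omega), map_add, map_nsmul, h2]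
  push_cast [hn]
  rw [smul_neg, nsmul_one]
  omega

theorem shift_zero (h1 : ∀ l ∈ S, 0 ≤ ρ l)
    (hσ : ∀ (l : S) (n : ℕ), (n : ℤ) ≤ ρ (l : M) → ((σ l n : M) = (l : M) + n • μ)) (l : S) :
    σ l 0 = l :=
  Subtype.ext <| by rw [hσ l 0 (by exact_mod_cast h1 l l.2), zero_smul, add_zero]

theorem apply_of'_shift (h1 : ∀ l ∈ S, 0 ≤ ρ l) (h2 : ρ μ = -1)
    (h3 : ∀ l ∈ S, 0 < ρ l → l + μ ∈ S) (D : Module.End K K[S])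
    (hD : ∀ l : S,
      (∀ h : 0 < ρ (l : M),
        D (of' K S l) = ((ρ (l : M) : K)) • of' K S (⟨(l : M) + μ, h3 l l.2 h⟩ : S))
      ∧ (ρ (l : M) = 0 → D (of' K S l) = 0))
    (hσ : ∀ (l : S) (n : ℕ), (n : ℤ) ≤ ρ (l : M) → ((σ l n : M) = (l : M) + n • μ))
    (l : S) (n : ℕ) (hn : n ≤ (ρ l).toNat) :
    D (of' K S (σ l n)) = (((ρ l).toNat - n : ℕ) : K) • of' K S (σ l (n + 1)) := by
  have hρ := rho_shift h1 h2 hσ l hn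
  rcases Nat.eq_zero_or_pos ((ρ l).toNat - n) with h0 | hpos
  · rw [(hD _).2 (by rw [hρ, h0, Nat.cast_zero]), h0, Nat.cast_zero, zero_smul]
  · have hl := Int.toNat_of_nonneg (h1 l l.2)
    rw [(hD _).1 (by rw [hρ]; exact_mod_cast hpos)]
    congr 1
    · rw [hρ, Int.cast_natCast]
    · refine congrArg _ (Subtype.ext ?_)
      change (σ l n : M) + μ = σ l (n + 1)
      rw [hσ l (n + 1) (by omega), hσ l n (by omega), succ_nsmul, add_assoc]

end Shift

theorem stmt4_general {K M : Type*} [Field K] [CharZero K] [AddCommGroup M]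
    (S : AddSubmonoid M) (ρ : M →+ ℤ) (μ : M)
    (h1 : ∀ l ∈ S, 0 ≤ ρ l) (h2 : ρ μ = -1)
    (h3 : ∀ l ∈ S, 0 < ρ l → l + μ ∈ S)
    (D : Derivation K (AddMonoidAlgebra K S) (AddMonoidAlgebra K S))
    (hD : ∀ l : S,
      (∀ h : 0 < ρ (l : M),
        D (of' K S l) = ((ρ (l : M) : K)) • of' K S (⟨(l : M) + μ, h3 l l.2 h⟩ : S))
      ∧ (ρ (l : M) = 0 → D (of' K S l) = 0))
    -- `σ l n` is the element `λ + nμ` of `S`, for `0 ≤ n ≤ ρ(λ)`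
    (σ : S → ℕ → S)
    (hσ : ∀ (l : S) (n : ℕ), (n : ℤ) ≤ ρ (l : M) → ((σ l n : M) = (l : M) + n • μ))
    (Φ : K → (AddMonoidAlgebra K S →ₗ[K] AddMonoidAlgebra K S))
    (hΦ : ∀ (s : K) (l : S), Φ s (of' K S l) =
      ∑ n ∈ Finset.range ((ρ (l : M)).toNat + 1),
        (((ρ (l : M)).toNat.choose n : K) * s ^ n) • of' K S (σ l n)) :
    ∀ (s : K) (a : AddMonoidAlgebra K S) (N : ℕ),
      (D.toLinearMap ^ (N + 1)) a = 0 →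
      Φ s a = ∑ n ∈ Finset.range (N + 1),
        (s ^ n / (n.factorial : K)) • (D.toLinearMap ^ n) a := by
  intro s a N hNa
  have hbasis (l : S) : ∀ᶠ m in atTop, Φ s (of' K S l) =
      ∑ n ∈ range (m + 1), (s ^ n / (n ! : K)) • (D.toLinearMap ^ n) (of' K S l) := by
    filter_upwards [eventually_ge_atTop (ρ l).toNat] with m hm
    have hexp := Module.End.sum_choose_mul_pow_smul_eq_sum_pow_div_factorial_smul D.toLinearMap
      (fun n => of' K S (σ l n)) _ (apply_of'_shift h1 h2 h3 D.toLinearMap hD hσ l) s hm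
    rwa [shift_zero h1 hσ l, ← hΦ] at hexp
  obtain ⟨m, hΦa, hNm⟩ :=
    ((eventually_eq_sum_smul_pow_apply (Φ s) _ _ hbasis a).and (eventually_ge_atTop N)).exists
  rw [hΦa, Module.End.sum_range_smul_pow_apply_eq_of_pow_apply_eq_zero _ _ hNm hNa]

/-- The one-parameter family `Φ` is the exponential of the locally nilpotent derivation `∂`:
if `∂^{N+1} a = 0` then `Φ_s a = ∑_{n=0}^{N} (s^n / n!) • ∂^n a`. -/
theorem stmt4 {K M : Type*} [Field K] [CharZero K] [AddCommGroup M]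
    [Module.Free ℤ M] [Module.Finite ℤ M]
    (S : AddSubmonoid M) (ρ : M →+ ℤ) (μ : M)
    (h1 : ∀ l ∈ S, 0 ≤ ρ l) (h2 : ρ μ = -1)
    (h3 : ∀ l ∈ S, 0 < ρ l → l + μ ∈ S)
    (D : Derivation K (AddMonoidAlgebra K S) (AddMonoidAlgebra K S))
    (hD : ∀ l : S,
      (∀ h : 0 < ρ (l : M),
        D (of' K S l) = ((ρ (l : M) : K)) • of' K S (⟨(l : M) + μ, h3 l l.2 h⟩ : S))
      ∧ (ρ (l : M) = 0 → D (of' K S l) = 0))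
    -- `σ l n` is the element `λ + nμ` of `S`, for `0 ≤ n ≤ ρ(λ)`
    (σ : S → ℕ → S)
    (hσ : ∀ (l : S) (n : ℕ), (n : ℤ) ≤ ρ (l : M) → ((σ l n : M) = (l : M) + n • μ))
    (Φ : K → (AddMonoidAlgebra K S →ₗ[K] AddMonoidAlgebra K S))
    (hΦ : ∀ (s : K) (l : S), Φ s (of' K S l) =
      ∑ n ∈ Finset.range ((ρ (l : M)).toNat + 1),
        (((ρ (l : M)).toNat.choose n : K) * s ^ n) • of' K S (σ l n)) :
    ∀ (s : K) (a : AddMonoidAlgebra K S) (N : ℕ),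
      (D.toLinearMap ^ (N + 1)) a = 0 →
      Φ s a = ∑ n ∈ Finset.range (N + 1),
        (s ^ n / (n.factorial : K)) • (D.toLinearMap ^ n) a :=
  stmt4_general S ρ μ h1 h2 h3 D hD σ hσ Φ hΦ
end

section
/- For every s ∈ K there exists a unique K-algebra automorphism φ_s of the field L with φ_s(f_λ) = f_λ · (1 + s·f_μ)^{ρ(λ)} for all λ ∈ M (the integer power taken in L, which makes sense since 1 + s·f_μ ≠ 0 because μ ≠ 0); moreover φ_0 is the identity and φ_s ∘ φ_t = φ_{s+t} for all s, t ∈ K. (This is formula (2) of the paper describing the action of the root subgroup H_μ on the B-semiinvariant rational functions f_λ.) -/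
/-!
The assignment `f_λ ↦ f_λ (1 + s f_μ)^{ρ λ}` is multiplicative in `λ`, hence defines a `K`-algebra
map `K[M] → L`. It is injective: after clearing the denominators `(1 + s f_μ)^{ρ λ}`, the
coefficients of an element on its monomials of maximal `ρ`-degree do not change, because
`1 + s f_μ` is `1` plus a term of negative `ρ`-degree. So it extends to an endomorphism `φ_s` of
the fraction field `L`, and any map out of `L` is determined by its values on the `f_λ`, which
gives uniqueness. As `ρ μ = -1`, `φ_s (1 + t f_μ) = (1 + (s + t) f_μ) / (1 + s f_μ)`, and
comparing on the `f_λ` gives `φ_s ∘ φ_t = φ_{s+t}`; in particular `φ_{-s}` inverts `φ_s`.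
-/

namespace AddMonoidAlgebra

section LeadingOne

variable {R M : Type*} [Semiring R] [AddCommGroup M] (ρ : M →+ ℤ)

def leadingOne : Submonoid R[M] where
  carrier := {x | x.coeff 0 = 1 ∧ ∀ c ∈ x.coeff.support, c ≠ 0 → ρ c < 0}
  one_mem' := ⟨by simp [one_def], fun c hc hc0 => by simp [one_def, Ne.symm hc0] at hc⟩
  mul_mem' := by
    classical
    rintro x y ⟨hx0, hx⟩ ⟨hy0, hy⟩
    have hle : ∀ {z : R[M]}, (∀ c ∈ z.coeff.support, c ≠ 0 → ρ c < 0) →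
        ∀ c ∈ z.coeff.support, ρ c ≤ 0 := fun hz c hc => by
      by_cases h : c = 0
      · simp [h]
      · exact (hz c hc h).le
    have hsum : ∀ a ∈ x.coeff.support, ∀ b ∈ y.coeff.support, ρ (a + b) = 0 → a = 0 ∧ b = 0 := by
      intro a ha b hb hab
      rw [map_add] at hab
      exact ⟨by_contra fun h => by linarith [hx a ha h, hle hy b hb],
        by_contra fun h => by linarith [hy b hb h, hle hx a ha]⟩
    have hunique : UniqueAdd x.coeff.support y.coeff.support 0 0 := fun a b ha hb hab =>
      hsum a ha b hb (by rw [hab, add_zero, map_zero])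
    refine ⟨?_, fun c hc hc0 => ?_⟩
    · simpa [hx0, hy0] using coeff_mul_add_of_uniqueAdd hunique
    · obtain ⟨a, ha, b, hb, rfl⟩ := Finset.mem_add.mp (support_coeff_mul_subset x y hc)
      refine lt_of_le_of_ne (by rw [map_add]; linarith [hle hx a ha, hle hy b hb]) fun h => hc0 ?_
      obtain ⟨rfl, rfl⟩ := hsum a ha b hb h
      exact add_zero 0

variable {ρ}

theorem one_add_single_ne_zero [Nontrivial R] {μ : M} (hμ : μ ≠ 0) (s : R) :
    (1 : R[M]) + single μ s ≠ 0 := fun h => by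
  simpa [one_def, hμ] using congr(($h).coeff 0)

theorem coeff_single_mul_of_mem_leadingOne {x : R[M]} (hx : x ∈ leadingOne ρ) {a l : M}
    (h : ρ a ≤ ρ l) (r : R) : (single a r * x).coeff l = (single a r).coeff l := by
  classical
  rw [coeff_single_mul_apply, coeff_single, Finsupp.single_apply]
  split_ifs with hal
  · rw [← hal, neg_add_cancel, hx.1, mul_one]
  · refine mul_eq_zero_of_right _ (Finsupp.notMem_support_iff.mp fun hc => ?_)
    have := hx.2 _ hc (by rwa [Ne, neg_add_eq_zero])
    rw [map_add, map_neg] at this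
    omega

theorem one_add_single_mem_leadingOne {μ : M} (hμ : ρ μ < 0) (s : R) :
    1 + single μ s ∈ leadingOne ρ := by
  classical
  have hμ0 : μ ≠ 0 := ne_of_apply_ne ρ (by rw [map_zero]; exact hμ.ne)
  refine ⟨by simp [one_def, hμ0], fun c hc hc0 => ?_⟩
  have hc' := Finsupp.support_add (coeff_add 1 (single μ s) ▸ hc)
  simp only [one_def, coeff_single, Finset.mem_union] at hc'
  rcases hc' with hc' | hc' <;>
    obtain rfl := Finset.mem_singleton.mp (Finsupp.support_single_subset hc')
  exacts [absurd rfl hc0, hμ]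

end LeadingOne

section Twist

variable {R M A : Type*} [CommRing R] [AddCommGroup M] [CommRing A] [Algebra R A]
  [Algebra R[M] A]

noncomputable def twist (ρ : M →+ ℤ) (u : Aˣ) : R[M] →ₐ[R] A :=
  lift R A M
    { toFun m := algebraMap R[M] A (of R M m) * ↑(u ^ ρ m.toAdd)
      map_one' := by simp only [map_one, toAdd_one, map_zero, zpow_zero, Units.val_one, mul_one]
      map_mul' a b := by
        simp only [map_mul, toAdd_mul, map_add, zpow_add, Units.val_mul]
        ring }

variable (ρ : M →+ ℤ) (u : Aˣ)

theorem twist_of' (l : M) : twist ρ u (of' R M l) = algebraMap R[M] A (of' R M l) * ↑(u ^ ρ l) :=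
  lift_of' _ l

variable [IsScalarTower R R[M] A]

theorem algebraMap_single (l : M) (r : R) :
    algebraMap R[M] A (single l r) = r • algebraMap R[M] A (of' R M l) := by
  rw [← IsScalarTower.coe_toAlgHom' R, ← map_smul, of'_apply, smul_single', mul_one]

theorem twist_single (l : M) (r : R) :
    twist ρ u (single l r) = algebraMap R[M] A (single l r) * ↑(u ^ ρ l) := by
  rw [algebraMap_single, smul_mul_assoc, ← twist_of', ← map_smul, of'_apply, smul_single', mul_one]

theorem twist_injective (hA : Function.Injective (algebraMap R[M] A)) {w : R[M]}
    (hw : w ∈ leadingOne ρ) (hu : (u : A) = algebraMap R[M] A w) :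
    Function.Injective (twist ρ u : R[M] →ₐ[R] A) := by
  classical
  rw [injective_iff_map_eq_zero]
  intro x hx
  by_contra hx0
  have hne : x.coeff.support.Nonempty := Finsupp.support_nonempty_iff.2 (by simpa using hx0)
  obtain ⟨top, htop, hmax⟩ := Finset.exists_max_image _ ρ hne
  obtain ⟨bot, -, hmin⟩ := Finset.exists_min_image _ ρ hne
  -- `y` is `twist ρ u x` with its denominators cleared; multiplying by powers of `w` does not
  -- change coefficients in `ρ`-degree `≥ ρ a`, so `y` and `x` agree at `top`.
  let y : R[M] := ∑ a ∈ x.coeff.support, single a (x.coeff a) * w ^ (ρ a - ρ bot).toNat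
  have hy : algebraMap R[M] A y = twist ρ u x * ↑(u ^ (-ρ bot)) := by
    conv_rhs => rw [← sum_coeff_single x]
    rw [map_finsuppSum, Finsupp.sum, Finset.sum_mul, map_sum]
    refine Finset.sum_congr rfl fun a ha => ?_
    rw [twist_single, map_mul, map_pow, ← hu, mul_assoc, ← Units.val_mul, ← zpow_add,
      ← sub_eq_add_neg, ← Units.val_pow_eq_pow_val, ← zpow_natCast,
      Int.toNat_of_nonneg (sub_nonneg.2 (hmin a ha))]
  have hy0 : y = 0 := hA (by rw [hy, hx, zero_mul, map_zero])
  have hytop : y.coeff top = x.coeff top := by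
    conv_rhs => rw [← sum_coeff_single x]
    simp only [y, Finsupp.sum, coeff_sum, Finsupp.finsetSum_apply]
    exact Finset.sum_congr rfl fun a ha =>
      coeff_single_mul_of_mem_leadingOne (pow_mem hw _) (hmax a ha) _
  exact Finsupp.mem_support_iff.1 htop (by rw [← hytop, hy0, coeff_zero, Finsupp.zero_apply])

end Twist

section RootAction

variable {K M : Type*} [Field K] [AddCommGroup M] (L : Type*) [Field L] [Algebra K[M] L]
  [IsFractionRing K[M] L] [Algebra K L] [IsScalarTower K K[M] L] {ρ : M →+ ℤ} {μ : M}

theorem algHom_ext_of_algebraMap_of' {F : Type*} [Field F] [Algebra K F] {j k : L →ₐ[K] F}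
    (h : ∀ l : M, j (algebraMap K[M] L (of' K M l)) = k (algebraMap K[M] L (of' K M l))) :
    j = k := by
  have hcomp : j.comp (IsScalarTower.toAlgHom K K[M] L) =
      k.comp (IsScalarTower.toAlgHom K K[M] L) := algHom_ext (fun l => h l) (Subsingleton.elim _ _)
  exact AlgHom.coe_ringHom_injective (IsFractionRing.ringHom_ext fun x => congr($hcomp x))

theorem ne_zero_of_map_eq_neg_one (hμ : ρ μ = -1) : μ ≠ 0 :=
  ne_of_apply_ne ρ (by rw [hμ, map_zero]; decide)

theorem one_add_smul_algebraMap_of'_ne_zero (hμ : μ ≠ 0) (s : K) :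
    1 + s • algebraMap K[M] L (of' K M μ) ≠ 0 := by
  rw [← algebraMap_single, ← map_one (algebraMap K[M] L), ← map_add,
    map_ne_zero_iff _ (IsFractionRing.injective K[M] L)]
  exact one_add_single_ne_zero hμ s

noncomputable def rootAlgHom (hμ : ρ μ = -1) (s : K) : L →ₐ[K] L :=
  IsFractionRing.liftAlgHom <| twist_injective ρ
    (Units.mk0 _ (one_add_smul_algebraMap_of'_ne_zero L (ne_zero_of_map_eq_neg_one hμ) s))
    (IsFractionRing.injective K[M] L)
    (one_add_single_mem_leadingOne (hμ.trans_lt neg_one_lt_zero) s)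
    (by rw [Units.val_mk0, map_add, map_one, algebraMap_single])

theorem rootAlgHom_algebraMap_of' (hμ : ρ μ = -1) (s : K) (l : M) :
    rootAlgHom L hμ s (algebraMap K[M] L (of' K M l)) =
      algebraMap K[M] L (of' K M l) * (1 + s • algebraMap K[M] L (of' K M μ)) ^ ρ l := by
  rw [rootAlgHom, IsFractionRing.liftAlgHom_apply, IsFractionRing.lift_algebraMap,
    AlgHom.toRingHom_eq_coe, RingHom.coe_coe, twist_of', Units.val_zpow_eq_zpow_val, Units.val_mk0]

theorem rootAlgHom_one_add_smul (hμ : ρ μ = -1) (s t : K) :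
    rootAlgHom L hμ s (1 + t • algebraMap K[M] L (of' K M μ)) =
      (1 + (s + t) • algebraMap K[M] L (of' K M μ)) / (1 + s • algebraMap K[M] L (of' K M μ)) := by
  have := one_add_smul_algebraMap_of'_ne_zero L (ne_zero_of_map_eq_neg_one hμ) s
  rw [map_add, map_one, map_smul, rootAlgHom_algebraMap_of', hμ, zpow_neg_one,
    eq_div_iff this, add_mul, one_mul, smul_mul_assoc, mul_assoc, inv_mul_cancel₀ this, mul_one,
    add_smul]
  abel

theorem rootAlgHom_comp (hμ : ρ μ = -1) (s t : K) :
    (rootAlgHom L hμ s).comp (rootAlgHom L hμ t) = rootAlgHom L hμ (s + t) := by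
  refine algHom_ext_of_algebraMap_of' L fun l : M => ?_
  have := one_add_smul_algebraMap_of'_ne_zero L (ne_zero_of_map_eq_neg_one hμ) s
  rw [AlgHom.comp_apply, rootAlgHom_algebraMap_of', map_mul, map_zpow₀, rootAlgHom_algebraMap_of',
    rootAlgHom_one_add_smul, rootAlgHom_algebraMap_of', div_zpow, mul_assoc, mul_div_cancel₀]
  exact zpow_ne_zero _ this

theorem rootAlgHom_zero (hμ : ρ μ = -1) : rootAlgHom L hμ 0 = AlgHom.id K L :=
  algHom_ext_of_algebraMap_of' L fun l : M => by
    rw [rootAlgHom_algebraMap_of', zero_smul, add_zero, one_zpow, mul_one, AlgHom.id_apply]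

noncomputable def rootAlgEquiv (hμ : ρ μ = -1) (s : K) : L ≃ₐ[K] L :=
  AlgEquiv.ofAlgHom (rootAlgHom L hμ s) (rootAlgHom L hμ (-s))
    (by rw [rootAlgHom_comp, add_neg_cancel, rootAlgHom_zero])
    (by rw [rootAlgHom_comp, neg_add_cancel, rootAlgHom_zero])

end RootAction

end AddMonoidAlgebra

open AddMonoidAlgebra

theorem stmt5_general {K M : Type*} [Field K] [AddCommGroup M]
    (L : Type*) [Field L] [Algebra (AddMonoidAlgebra K M) L]
    [IsFractionRing (AddMonoidAlgebra K M) L]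
    [Algebra K L] [IsScalarTower K (AddMonoidAlgebra K M) L]
    (ρ : M →+ ℤ) (μ : M) (h2 : ρ μ = -1) :
    ∃ φ : K → (L ≃ₐ[K] L),
      (∀ (s : K) (l : M),
        φ s (algebraMap (AddMonoidAlgebra K M) L (of' K M l))
          = algebraMap (AddMonoidAlgebra K M) L (of' K M l)
            * (1 + s • algebraMap (AddMonoidAlgebra K M) L (of' K M μ)) ^ (ρ l))
      ∧ (∀ (s : K) (ψ : L ≃ₐ[K] L),
          (∀ l : M,
            ψ (algebraMap (AddMonoidAlgebra K M) L (of' K M l))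
              = algebraMap (AddMonoidAlgebra K M) L (of' K M l)
                * (1 + s • algebraMap (AddMonoidAlgebra K M) L (of' K M μ)) ^ (ρ l))
          → ψ = φ s)
      ∧ φ 0 = AlgEquiv.refl
      ∧ (∀ (s t : K) (x : L), φ s (φ t x) = φ (s + t) x) := by
  refine ⟨rootAlgEquiv L h2, rootAlgHom_algebraMap_of' L h2, fun s ψ hψ => ?_, ?_,
    fun s t x => congr($(rootAlgHom_comp L h2 s t) x)⟩
  · refine AlgEquiv.coe_toAlgHom_injective (algHom_ext_of_algebraMap_of' L fun l : M => ?_)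
    exact (hψ l).trans (rootAlgHom_algebraMap_of' L h2 s l).symm
  · exact AlgEquiv.coe_toAlgHom_injective (rootAlgHom_zero L h2)

/-- For every `s ∈ K` there is a unique `K`-algebra automorphism `φ_s` of the fraction field `L`
of `K[M]` with `φ_s f_λ = f_λ (1 + s f_μ)^{ρ(λ)}` for all `λ ∈ M`; moreover `φ_0 = id` and
`φ_s ∘ φ_t = φ_{s+t}`. -/
theorem stmt5 {K M : Type*} [Field K] [CharZero K] [AddCommGroup M]
    [Module.Free ℤ M] [Module.Finite ℤ M]
    (L : Type*) [Field L] [Algebra (AddMonoidAlgebra K M) L]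
    [IsFractionRing (AddMonoidAlgebra K M) L]
    [Algebra K L] [IsScalarTower K (AddMonoidAlgebra K M) L]
    (ρ : M →+ ℤ) (μ : M) (h2 : ρ μ = -1) :
    ∃ φ : K → (L ≃ₐ[K] L),
      (∀ (s : K) (l : M),
        φ s (algebraMap (AddMonoidAlgebra K M) L (of' K M l))
          = algebraMap (AddMonoidAlgebra K M) L (of' K M l)
            * (1 + s • algebraMap (AddMonoidAlgebra K M) L (of' K M μ)) ^ (ρ l))
      ∧ (∀ (s : K) (ψ : L ≃ₐ[K] L),
          (∀ l : M,
            ψ (algebraMap (AddMonoidAlgebra K M) L (of' K M l))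
              = algebraMap (AddMonoidAlgebra K M) L (of' K M l)
                * (1 + s • algebraMap (AddMonoidAlgebra K M) L (of' K M μ)) ^ (ρ l))
          → ψ = φ s)
      ∧ φ 0 = AlgEquiv.refl
      ∧ (∀ (s t : K) (x : L), φ s (φ t x) = φ (s + t) x) :=
  stmt5_general L ρ μ h2
end

section
/- Let v : Lˣ → ℤ be a group homomorphism such that v(c) = 0 for every c ∈ Kˣ and v(x + y) ≥ min(v(x), v(y)) whenever x, y, x + y are all nonzero (an additive valuation on L trivial on K). If v is invariant under the one-parameter group φ, i.e. v(φ_s(x)) = v(x) for all s ∈ K and all x ∈ Lˣ, then v(f_μ) ≥ 0. (This is the abstract form of Proposition: for a horizontal B-root subgroup of weight μ moving the divisor D₀, every H-stable B-stable prime divisor D ≠ D₀ satisfies ⟨ϰ(D), μ⟩ ≥ 0.) -/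
open AddMonoidAlgebra

/-- If an additive valuation `v` on the fraction field `L` of `K[M]`, trivial on `K`, is invariant
under the one-parameter group `φ` attached to the root `μ`, then `v(f_μ) ≥ 0`. -/
theorem stmt6 {K M : Type*} [Field K] [CharZero K] [AddCommGroup M]
    [Module.Free ℤ M] [Module.Finite ℤ M]
    (L : Type*) [Field L] [Algebra (AddMonoidAlgebra K M) L]
    [IsFractionRing (AddMonoidAlgebra K M) L]
    [Algebra K L] [IsScalarTower K (AddMonoidAlgebra K M) L]
    (ρ : M →+ ℤ) (μ : M) (h2 : ρ μ = -1)
    (φ : K → (L ≃ₐ[K] L))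
    (hφ : ∀ (s : K) (l : M),
      φ s (algebraMap (AddMonoidAlgebra K M) L (of' K M l))
        = algebraMap (AddMonoidAlgebra K M) L (of' K M l)
          * (1 + s • algebraMap (AddMonoidAlgebra K M) L (of' K M μ)) ^ (ρ l))
    (v : Lˣ → ℤ)
    (hv_mul : ∀ x y : Lˣ, v (x * y) = v x + v y)
    (hv_K : ∀ (u : Lˣ) (c : K), (u : L) = algebraMap K L c → v u = 0)
    (hv_min : ∀ x y z : Lˣ, (x : L) + (y : L) = (z : L) → min (v x) (v y) ≤ v z)
    (hv_inv : ∀ (s : K) (x y : Lˣ), φ s (x : L) = (y : L) → v y = v x)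
    (u : Lˣ) (hu : (u : L) = algebraMap (AddMonoidAlgebra K M) L (of' K M μ)) :
    0 ≤ v u := by
  have hu0 : (u : L) ≠ 0 := u.ne_zero
  set w0 : L := 1 + (1 : K) • (algebraMap (AddMonoidAlgebra K M) L (of' K M μ)) with hw0
  have hφ1 : φ 1 (u : L) = (u : L) * w0 ^ (-1 : ℤ) := by
    rw [hu, hφ 1 μ, h2]
  have hw0ne : w0 ≠ 0 := by
    intro h
    apply hu0
    have h0 : φ 1 (u : L) = 0 := by rw [hφ1, h]; simp
    exact (φ 1).injective (h0.trans (map_zero (φ 1)).symm)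
  set w : Lˣ := Units.mk0 w0 hw0ne with hw
  have h1 : v 1 = 0 := hv_K 1 1 (by simp)
  have hinvsum : v w + v w⁻¹ = 0 := by
    rw [← hv_mul, mul_inv_cancel, h1]
  have hcoe : φ 1 (u : L) = ((u * w⁻¹ : Lˣ) : L) := by
    rw [hφ1, zpow_neg_one]
    simp [hw]
  have hvu : v (u * w⁻¹) = v u := hv_inv 1 u (u * w⁻¹) hcoe
  rw [hv_mul] at hvu
  have hvwinv : v w⁻¹ = 0 := by omega
  have hvw : v w = 0 := by omega
  have hneg1 : v (-1 : Lˣ) = 0 := by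
    apply hv_K (-1 : Lˣ) (-1 : K)
    simp
  have hsum : ((w : L)) + ((-1 : Lˣ) : L) = (u : L) := by
    simp [hw, hw0, hu]
  have := hv_min w (-1) u hsum
  rw [hvw, hneg1] at this
  simpa using this
end

section
/- Let σ : M → ℤ be an additive group homomorphism with σ(λ) ≥ 0 for every λ ∈ S and σ(μ) ≥ 0. Then the K-linear span I of {f_λ | λ ∈ S, σ(λ) > 0} is an ideal of K[S], and ∂(I) ⊆ I. (This is the stability, under the standard locally nilpotent derivation ∂_μ, of the ideal of the orbit closure corresponding to a ray of the weight cone, used in the proof of Proposition 6.6 of the paper.) -/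
/-!
Since `σ ≥ 0` on `S`, the exponents `{λ ∈ S | σ λ > 0}` form an ideal of the monoid `S`, so the
monomials they index span an ideal of `K[S]`. Since `σ μ ≥ 0`, the derivation sends such an `f_λ`
to a multiple of `f_{λ+μ}` with `σ (λ + μ) ≥ σ λ > 0`, or to `0`.
-/

open AddMonoidAlgebra

namespace AddMonoidAlgebra

variable {k G : Type*} [CommSemiring k] [AddCommMonoid G]

theorem single_mul_of'_mem_span_of'_image {T : Set G} (hT : ∀ g, ∀ t ∈ T, g + t ∈ T)
    (g : G) (c : k) {t : G} (ht : t ∈ T) :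
    single g c * of' k G t ∈ Submodule.span k (of' k G '' T) := by
  have hmul : single g c * of' k G t = c • of' k G (g + t) := by
    rw [of'_apply, of'_apply, single_mul_single, mul_one, smul_single', mul_one]
  rw [hmul]
  exact Submodule.smul_mem _ c (Submodule.subset_span ⟨g + t, hT g t ht, rfl⟩)

theorem mul_mem_span_of'_image {T : Set G} (hT : ∀ g, ∀ t ∈ T, g + t ∈ T) (a : k[G])
    {x : k[G]} (hx : x ∈ Submodule.span k (of' k G '' T)) :
    a * x ∈ Submodule.span k (of' k G '' T) := by
  refine (Submodule.span_le (p := (Submodule.span k _).comap (LinearMap.mulLeft k a))).mpr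
    ?_ hx
  rintro _ ⟨t, ht, rfl⟩
  rw [SetLike.mem_coe, Submodule.mem_comap, LinearMap.mulLeft_apply]
  induction a using AddMonoidAlgebra.induction_linear with
  | zero => simp
  | add p q hp hq => rw [add_mul]; exact Submodule.add_mem _ hp hq
  | single g c => exact single_mul_of'_mem_span_of'_image hT g c ht

end AddMonoidAlgebra

theorem stmt11_general {K M : Type*} [Field K] [AddCommGroup M]
    (S : AddSubmonoid M) (ρ : M →+ ℤ) (μ : M)
    (h1 : ∀ l ∈ S, 0 ≤ ρ l)
    (h3 : ∀ l ∈ S, 0 < ρ l → l + μ ∈ S)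
    (D : Derivation K (AddMonoidAlgebra K S) (AddMonoidAlgebra K S))
    (hD : ∀ l : S,
      (∀ h : 0 < ρ (l : M),
        D (of' K S l) = ((ρ (l : M) : K)) • of' K S (⟨(l : M) + μ, h3 l l.2 h⟩ : S))
      ∧ (ρ (l : M) = 0 → D (of' K S l) = 0))
    (σ : M →+ ℤ) (hσS : ∀ l ∈ S, 0 ≤ σ l) (hσμ : 0 ≤ σ μ) :
    (∀ a : AddMonoidAlgebra K S,
      ∀ x ∈ Submodule.span K {x : AddMonoidAlgebra K S | ∃ l : S, 0 < σ (l : M) ∧ x = of' K S l},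
        a * x ∈ Submodule.span K
          {x : AddMonoidAlgebra K S | ∃ l : S, 0 < σ (l : M) ∧ x = of' K S l})
    ∧ (∀ x ∈ Submodule.span K
          {x : AddMonoidAlgebra K S | ∃ l : S, 0 < σ (l : M) ∧ x = of' K S l},
        D x ∈ Submodule.span K
          {x : AddMonoidAlgebra K S | ∃ l : S, 0 < σ (l : M) ∧ x = of' K S l}) := by
  have hI : {x : AddMonoidAlgebra K S | ∃ l : S, 0 < σ (l : M) ∧ x = of' K S l} =
      of' K S '' {l | 0 < σ l} := by
    ext x; simp [eq_comm]
  rw [hI]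
  refine ⟨fun a x hx => mul_mem_span_of'_image ?_ a hx, fun x hx => ?_⟩
  · intro m l hl
    simpa using add_pos_of_nonneg_of_pos (hσS _ m.2) hl
  refine (Submodule.span_le (p := (Submodule.span K _).comap D.toLinearMap)).mpr ?_ hx
  rintro _ ⟨l, hl, rfl⟩
  rw [SetLike.mem_coe, Submodule.mem_comap, Derivation.coeFn_coe]
  rcases (h1 l l.2).lt_or_eq with hρ | hρ
  · have hlμ : (0 : ℤ) < σ ((l : M) + μ) := by
      simpa using add_pos_of_pos_of_nonneg hl hσμ
    rw [(hD l).1 hρ]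
    exact Submodule.smul_mem _ _ (Submodule.subset_span ⟨_, hlμ, rfl⟩)
  · rw [(hD l).2 hρ.symm]
    exact Submodule.zero_mem _

/-- If `σ : M →+ ℤ` is nonnegative on `S` and on `μ`, then the `K`-linear span `I` of
`{f_λ ∣ λ ∈ S, σ(λ) > 0}` is an ideal of `K[S]` stable under the standard locally nilpotent
derivation `∂` attached to the Demazure root `μ`. -/
theorem stmt11 {K M : Type*} [Field K] [CharZero K] [AddCommGroup M]
    [Module.Free ℤ M] [Module.Finite ℤ M]
    (S : AddSubmonoid M) (ρ : M →+ ℤ) (μ : M)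
    (h1 : ∀ l ∈ S, 0 ≤ ρ l) (h2 : ρ μ = -1)
    (h3 : ∀ l ∈ S, 0 < ρ l → l + μ ∈ S)
    (D : Derivation K (AddMonoidAlgebra K S) (AddMonoidAlgebra K S))
    (hD : ∀ l : S,
      (∀ h : 0 < ρ (l : M),
        D (of' K S l) = ((ρ (l : M) : K)) • of' K S (⟨(l : M) + μ, h3 l l.2 h⟩ : S))
      ∧ (ρ (l : M) = 0 → D (of' K S l) = 0))
    (σ : M →+ ℤ) (hσS : ∀ l ∈ S, 0 ≤ σ l) (hσμ : 0 ≤ σ μ) :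
    (∀ a : AddMonoidAlgebra K S,
      ∀ x ∈ Submodule.span K {x : AddMonoidAlgebra K S | ∃ l : S, 0 < σ (l : M) ∧ x = of' K S l},
        a * x ∈ Submodule.span K
          {x : AddMonoidAlgebra K S | ∃ l : S, 0 < σ (l : M) ∧ x = of' K S l})
    ∧ (∀ x ∈ Submodule.span K
          {x : AddMonoidAlgebra K S | ∃ l : S, 0 < σ (l : M) ∧ x = of' K S l},
        D x ∈ Submodule.span K
          {x : AddMonoidAlgebra K S | ∃ l : S, 0 < σ (l : M) ∧ x = of' K S l}) :=
  stmt11_general S ρ μ h1 h3 D hD σ hσS hσμ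
end
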